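/- arXiv:math/0612632 — 7 statements merged into one kernel-verified Lean document; each statement's English description precedes it below -/
import Mathlib

section
/- If G is a non-abelian CSA group, then every nontrivial normal subgroup of G is itself a non-abelian CSA group; in particular, no nontrivial normal subgroup of G is abelian. -/
universe u

/-- A group is *CSA* if every maximal abelian subgroup `A` is malnormal:
for every `g ∉ A`, `A ⊓ gAg⁻¹ = ⊥`. -/
def IsCSA (G : Type u) [Group G] : Prop :=
  ∀ A : Subgroup G, Maximal (fun H : Subgroup G => IsMulCommutative H) A →
    ∀ g : G, g ∉ A → A ⊓ Subgroup.map (MulAut.conj g).toMonoidHom A = ⊥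

/-!
A maximal abelian subgroup `B` of a subgroup `K ≤ G` lies in a maximal abelian subgroup `A` of `G`
with `A ∩ K = B`; so every `g ∈ K \ B` lies outside `A`, and `B ∩ gBg⁻¹ ≤ A ∩ gAg⁻¹ = 1`. Hence
every subgroup of a CSA group is CSA. If a nontrivial normal subgroup `N` were abelian, a maximal
abelian `A ⊇ N` would contain `N = gNg⁻¹ ≤ gAg⁻¹` for every `g`, so malnormality forces `A = G`.
-/

namespace Subgroup

variable {G H : Type*} [Group G] [Group H]

theorem exists_le_maximal_isMulCommutative (B : Subgroup G) [IsMulCommutative B] :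
    ∃ A, B ≤ A ∧ Maximal (fun A : Subgroup G => IsMulCommutative A) A :=
  zorn_le_nonempty₀ {A : Subgroup G | IsMulCommutative A}
    (fun c hc hchain A₀ hA₀ => by
      have : Nonempty c := ⟨⟨A₀, hA₀⟩⟩
      have (A : c) : IsMulCommutative (A : Subgroup G) := hc A.2
      refine ⟨sSup c, ?_, fun _ => le_sSup⟩
      rw [sSup_eq_iSup']
      exact isMulCommutative_iSup hchain.directedOn.directed_val)
    B ‹_›

theorem map_map_conj (f : H →* G) (g : H) (B : Subgroup H) :
    (B.map (MulAut.conj g).toMonoidHom).map f = (B.map f).map (MulAut.conj (f g)).toMonoidHom := by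
  simp only [map_map]
  congr 1
  ext x
  simp

theorem subgroupOf_eq_of_maximal_isMulCommutative {K : Subgroup G} {B : Subgroup K}
    (hB : Maximal (fun B : Subgroup K => IsMulCommutative B) B) {A : Subgroup G}
    [IsMulCommutative A] (hBA : B.map K.subtype ≤ A) : A.subgroupOf K = B :=
  (hB.eq_of_le inferInstance fun b hb => hBA ⟨b, hb, rfl⟩).symm

end Subgroup

open Subgroup

variable {G : Type u} [Group G]

theorem IsCSA.subgroup (hG : IsCSA G) (K : Subgroup G) : IsCSA K := by
  intro B hB g hgB
  have : IsMulCommutative B := hB.prop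
  obtain ⟨A, hBA, hA⟩ := (B.map K.subtype).exists_le_maximal_isMulCommutative
  have : IsMulCommutative A := hA.prop
  have hgA : (g : G) ∉ A := fun hgA =>
    hgB (subgroupOf_eq_of_maximal_isMulCommutative hB hBA ▸ hgA)
  rw [← (map_injective K.subtype_injective).eq_iff, Subgroup.map_bot, eq_bot_iff, ← hG A hA g hgA]
  refine (map_inf_le _ _ _).trans (inf_le_inf hBA ?_)
  rw [map_map_conj]
  exact map_mono hBA

theorem IsCSA.eq_top_of_normal_le (hG : IsCSA G) {A : Subgroup G}
    (hA : Maximal (fun A : Subgroup G => IsMulCommutative A) A) {N : Subgroup G} (hN : N.Normal)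
    (hNbot : N ≠ ⊥) (hNA : N ≤ A) : A = ⊤ := by
  by_contra! hAtop
  obtain ⟨g, hgA⟩ := not_forall.1 (mt (eq_top_iff' A).2 hAtop)
  have hN_le_conj : N ≤ A.map (MulAut.conj g).toMonoidHom := fun n hn =>
    ⟨g⁻¹ * n * g, hNA (by simpa using hN.conj_mem n hn g⁻¹), by simp [mul_assoc]⟩
  exact hNbot (eq_bot_iff.2 (hG A hA g hgA ▸ le_inf hNA hN_le_conj))

theorem IsCSA.isMulCommutative_of_normal (hG : IsCSA G) {N : Subgroup G} (hN : N.Normal)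
    (hNbot : N ≠ ⊥) [IsMulCommutative N] : IsMulCommutative G := by
  obtain ⟨A, hNA, hA⟩ := N.exists_le_maximal_isMulCommutative
  have : IsMulCommutative A := hA.prop
  have hAtop := hG.eq_top_of_normal_le hA hN hNbot hNA
  exact isMulCommutative_iff.2 fun a b =>
    setLike_mul_comm (s := A) (hAtop ▸ mem_top a) (hAtop ▸ mem_top b)

/-- Every nontrivial normal subgroup of a non-abelian CSA group is itself a
non-abelian CSA group; in particular it is not abelian. -/
theorem stmt_2 (G : Type u) [Group G] (hcsa : IsCSA G)
    (hna : ∃ a b : G, a * b ≠ b * a)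
    (N : Subgroup G) (hN : N.Normal) (hNnt : N ≠ ⊥) :
    IsCSA N ∧ ∃ a b : N, a * b ≠ b * a := by
  refine ⟨hcsa.subgroup N, ?_⟩
  by_contra! hNcomm
  have : IsMulCommutative N := isMulCommutative_iff.2 hNcomm
  obtain ⟨a, b, hab⟩ := hna
  exact hab (isMulCommutative_iff.1 (hcsa.isMulCommutative_of_normal hN hNnt) a b)
end

section
/- Every non-abelian CSA group is infinite; equivalently, no nontrivial finite group that is non-abelian is CSA. -/
/-!
Suppose `G` is finite, CSA and non-abelian, and let `A` be a maximal abelian subgroup containing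
a non-central element, so `1 < A < G`. Malnormality makes `(gA, a) ↦ g a g⁻¹` injective on
`G ⧸ A × (A \ {1})`, so the conjugates of `A` contain `|G| - [G : A] ≥ |G| / 2` nontrivial
elements, and since `[G : A] ≥ 2` they miss some `c ≠ 1`. If `B` is a maximal abelian subgroup
containing `c`, the conjugates of `B` contribute another `|G| - [G : B] ≥ |G| / 2` nontrivial
elements, and these are new: in a CSA group everything commuting with a nontrivial element of a
maximal abelian subgroup lies in it, so a common element would make `c` conjugate into `A`.
Together with `1` this exceeds `|G|`.
-/

universe u

open Set Subgroup

namespace Subgroup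

variable {G : Type*} [Group G]

def IsMalnormal (A : Subgroup G) : Prop :=
  ∀ g : G, g ∉ A → A ⊓ A.map (MulAut.conj g).toMonoidHom = ⊥

theorem IsMalnormal.mem_of_conj_mem {A : Subgroup G} (hA : A.IsMalnormal) {g x : G}
    (hx : x ∈ A) (hx1 : x ≠ 1) (hgx : g * x * g⁻¹ ∈ A) : g ∈ A := by
  by_contra hg
  have hmem : g * x * g⁻¹ ∈ A ⊓ A.map (MulAut.conj g).toMonoidHom :=
    ⟨hgx, mem_map_of_mem _ hx⟩
  rw [hA g hg, mem_bot, conj_eq_one_iff] at hmem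
  exact hx1 hmem

theorem IsMalnormal.mem_of_commute {A : Subgroup G} (hA : A.IsMalnormal) {g x : G}
    (hx : x ∈ A) (hx1 : x ≠ 1) (hgx : Commute g x) : g ∈ A :=
  hA.mem_of_conj_mem hx hx1 (by rwa [hgx.eq, mul_inv_cancel_right])

theorem two_mul_index_le_card [Finite G] {A : Subgroup G} {x : G} (hx : x ∈ A)
    (hx1 : x ≠ 1) : 2 * A.index ≤ Nat.card G := by
  have hA : A ≠ ⊥ := ne_bot_iff_exists_ne_one.mpr ⟨⟨x, hx⟩, by simpa using hx1⟩
  rw [← A.index_mul_card, mul_comm]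
  exact Nat.mul_le_mul_left _ ((one_lt_card_iff_ne_bot A).mpr hA)

theorem card_ne_one_add_one [Finite G] (A : Subgroup G) :
    Nat.card {a : A // a ≠ 1} + 1 = Nat.card A := by
  classical
  rw [← Nat.card_congr (Equiv.optionSubtypeNe (1 : A)), Finite.card_option]

theorem exists_maximal_isMulCommutative_mem [Finite G] (x : G) :
    ∃ A : Subgroup G, Maximal (fun H : Subgroup G => IsMulCommutative H) A ∧ x ∈ A := by
  obtain ⟨A, hxA, hA⟩ :=
    Finite.exists_le_maximal (p := fun H : Subgroup G => IsMulCommutative H)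
      (zpowers_isMulCommutative x)
  exact ⟨A, hA, hxA (mem_zpowers x)⟩

theorem conj_inv_mul_of_conj_eq {g g' a b : G} (h : g * a * g⁻¹ = g' * b * g'⁻¹) :
    (g⁻¹ * g') * b * (g⁻¹ * g')⁻¹ = a :=
  calc (g⁻¹ * g') * b * (g⁻¹ * g')⁻¹ = g⁻¹ * (g' * b * g'⁻¹) * g := by group
    _ = a := by rw [← h]; group

section conjOfQuotient

variable (A : Subgroup G) [IsMulCommutative A]

def conjOfQuotient (p : (G ⧸ A) × {a : A // a ≠ 1}) : G :=
  p.1.liftOn' (fun g => g * p.2.1 * g⁻¹) fun g g' h => by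
    obtain ⟨k, hk, rfl⟩ : ∃ k ∈ A, g * k = g' :=
      ⟨g⁻¹ * g', QuotientGroup.leftRel_apply.mp h, mul_inv_cancel_left g g'⟩
    calc g * p.2.1 * g⁻¹ = g * (p.2.1 * k) * (g * k)⁻¹ := by group
      _ = g * k * p.2.1 * (g * k)⁻¹ := by
        rw [← setLike_mul_comm hk p.2.1.2, ← mul_assoc]

@[simp]
theorem conjOfQuotient_mk (g : G) (a : {a : A // a ≠ 1}) :
    conjOfQuotient A (g, a) = g * a * g⁻¹ := rfl

theorem one_notMem_range_conjOfQuotient : (1 : G) ∉ range (conjOfQuotient A) := by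
  rintro ⟨⟨q, a, ha⟩, h⟩
  induction q using QuotientGroup.induction_on with | H g => ?_
  rw [conjOfQuotient_mk, conj_eq_one_iff, OneMemClass.coe_eq_one] at h
  exact ha h

variable {A}

theorem IsMalnormal.injective_conjOfQuotient (hA : A.IsMalnormal) :
    Function.Injective (conjOfQuotient A) := by
  rintro ⟨q, a⟩ ⟨q', a'⟩ h
  induction q using QuotientGroup.induction_on with | H g => ?_
  induction q' using QuotientGroup.induction_on with | H g' => ?_
  rw [conjOfQuotient_mk, conjOfQuotient_mk] at h
  have hconj := conj_inv_mul_of_conj_eq h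
  have hk : g⁻¹ * g' ∈ A :=
    hA.mem_of_conj_mem a'.1.2 (by simpa using a'.2) (hconj ▸ a.1.2)
  have haa' : (a : G) = a' := by
    rw [← hconj, setLike_mul_comm hk a'.1.2, mul_inv_cancel_right]
  simp only [Prod.mk.injEq, QuotientGroup.eq]
  exact ⟨hk, Subtype.ext (Subtype.ext haa')⟩

theorem IsMalnormal.ncard_range_conjOfQuotient_add_index [Finite G] (hA : A.IsMalnormal) :
    (range (conjOfQuotient A)).ncard + A.index = Nat.card G := by
  rw [ncard_range_of_injective hA.injective_conjOfQuotient, Nat.card_prod, ← A.index_mul_card,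
    ← card_ne_one_add_one A, Subgroup.index]
  ring

theorem IsMalnormal.exists_notMem_range_conjOfQuotient [Finite G] (hA : A.IsMalnormal)
    (hAtop : A ≠ ⊤) : ∃ c ≠ 1, c ∉ range (conjOfQuotient A) := by
  by_contra! hcover
  have hunion : insert 1 (range (conjOfQuotient A)) = univ :=
    eq_univ_of_forall fun c => or_iff_not_imp_left.mpr (hcover c)
  have hcard := congrArg ncard hunion
  rw [ncard_insert_of_notMem (one_notMem_range_conjOfQuotient A), ncard_univ] at hcard
  have := hA.ncard_range_conjOfQuotient_add_index
  have := one_lt_index_of_ne_top hAtop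
  omega

theorem IsMalnormal.disjoint_range_conjOfQuotient {B : Subgroup G} [IsMulCommutative B]
    (hA : A.IsMalnormal) {c : G} (hcB : c ∈ B) (hc1 : c ≠ 1)
    (hc : c ∉ range (conjOfQuotient A)) :
    Disjoint (range (conjOfQuotient A)) (range (conjOfQuotient B)) := by
  rw [disjoint_left]
  rintro _ ⟨⟨q, a⟩, rfl⟩ ⟨⟨q', b⟩, h⟩
  induction q using QuotientGroup.induction_on with | H g => ?_
  induction q' using QuotientGroup.induction_on with | H g' => ?_
  rw [conjOfQuotient_mk, conjOfQuotient_mk] at h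
  have hconj := conj_inv_mul_of_conj_eq h.symm
  set k := g⁻¹ * g'
  -- `c` commutes with `b`, so `k c k⁻¹` commutes with `a`, which pins it down to `A`.
  have hkc : k * c * k⁻¹ ∈ A := by
    refine hA.mem_of_commute a.1.2 (by simpa using a.2) ?_
    rw [← hconj]
    exact (Commute.conj_iff k).mpr (setLike_mul_comm hcB b.1.2)
  have hkc1 : (⟨k * c * k⁻¹, hkc⟩ : A) ≠ 1 := by simpa using hc1
  refine hc ⟨(((k⁻¹ : G) : G ⧸ A), ⟨_, hkc1⟩), ?_⟩
  simp only [conjOfQuotient_mk]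
  group

end conjOfQuotient

end Subgroup

theorem IsCSA.isMalnormal {G : Type u} [Group G] (hcsa : IsCSA G) {A : Subgroup G}
    (hA : Maximal (fun H : Subgroup G => IsMulCommutative H) A) : A.IsMalnormal :=
  hcsa A hA

/-- Every non-abelian CSA group is infinite. -/
theorem stmt_3 (G : Type u) [Group G] (hcsa : IsCSA G)
    (hna : ∃ a b : G, a * b ≠ b * a) : Infinite G := by
  by_contra hinf
  have : Finite G := not_infinite_iff_finite.mp hinf
  obtain ⟨a, b, hab⟩ := hna
  have ha1 : a ≠ 1 := by rintro rfl; simp at hab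
  obtain ⟨A, hA, haA⟩ := exists_maximal_isMulCommutative_mem a
  have : IsMulCommutative A := hA.prop
  have hAtop : A ≠ ⊤ := fun h => hab (setLike_mul_comm (h ▸ mem_top a) (h ▸ mem_top b))
  obtain ⟨c, hc1, hc⟩ := (hcsa.isMalnormal hA).exists_notMem_range_conjOfQuotient hAtop
  obtain ⟨B, hB, hcB⟩ := exists_maximal_isMulCommutative_mem c
  have : IsMulCommutative B := hB.prop
  have hdisj := (hcsa.isMalnormal hA).disjoint_range_conjOfQuotient hcB hc1 hc
  have hcount := ncard_le_card (insert 1 (range (conjOfQuotient A) ∪ range (conjOfQuotient B)))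
  rw [ncard_insert_of_notMem fun h => h.elim (one_notMem_range_conjOfQuotient A)
    (one_notMem_range_conjOfQuotient B), ncard_union_eq hdisj] at hcount
  have hcardA := (hcsa.isMalnormal hA).ncard_range_conjOfQuotient_add_index
  have hcardB := (hcsa.isMalnormal hB).ncard_range_conjOfQuotient_add_index
  have hindexA := two_mul_index_le_card haA ha1
  have hindexB := two_mul_index_le_card hcB hc1
  omega
end

section
/- Let G be a finite group all of whose subgroups are indecomposable. If G is not a p-group (i.e., its order is not a prime power), then the center of G is trivial. -/
universe u

/-- A group is *indecomposable* if whenever it is isomorphic to a direct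
product `A × B` of groups, one of `A` or `B` is trivial. -/
def Indecomposable (G : Type u) [Group G] : Prop :=
  ∀ (A B : Type u) [Group A] [Group B], Nonempty (G ≃* A × B) →
    Subsingleton A ∨ Subsingleton B

/-- If all subgroups of a finite group `G` are indecomposable and `G` is not
a `p`-group, then the center of `G` is trivial. -/
theorem stmt_11 (G : Type) [Group G] [Fintype G]
    (hind : ∀ H : Subgroup G, Indecomposable H)
    (hnp : ¬ ∃ p : ℕ, p.Prime ∧ IsPGroup p G) :
    Subgroup.center G = ⊥ := by
  by_contra hbot
  obtain ⟨⟨z, hzc⟩, hz1⟩ := Subgroup.ne_bot_iff_exists_ne_one.mp hbot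
  have hz1' : z ≠ 1 := by simpa [Subtype.ext_iff] using hz1
  -- a prime `p` dividing the order of `z`
  have hordz : orderOf z ≠ 1 := by simpa using hz1'
  obtain ⟨p, hp, hpdvd⟩ := Nat.exists_prime_and_dvd hordz
  haveI : Fact p.Prime := ⟨hp⟩
  -- an element of order `p` in the center
  set z' : G := z ^ (orderOf z / p) with hz'def
  have hordz0 : orderOf z ≠ 0 := (orderOf_pos z).ne'
  have hordz' : orderOf z' = p := orderOf_pow_orderOf_div hordz0 hpdvd
  have hz'c : z' ∈ Subgroup.center G := Subgroup.pow_mem _ hzc _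
  -- a prime `q ≠ p` dividing the order of `G`
  have hnotp : ¬ IsPGroup p G := fun h => hnp ⟨p, hp, h⟩
  have hcard0 : Fintype.card G ≠ 0 := Fintype.card_ne_zero
  have : ¬ ∀ {d : ℕ}, d.Prime → d ∣ Fintype.card G → d = p := by
    intro h
    apply hnotp
    rw [IsPGroup.iff_card]
    rw [Nat.card_eq_fintype_card]
    exact ⟨_, Nat.eq_prime_pow_of_unique_prime_dvd hcard0 h⟩
  push_neg at this
  obtain ⟨q, hq, hqdvd, hqp⟩ := this
  haveI : Fact q.Prime := ⟨hq⟩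
  obtain ⟨x, hx⟩ := exists_prime_orderOf_dvd_card q hqdvd
  -- the element `z' * x` has order `p * q`
  have hcomm : Commute z' x := (Subgroup.mem_center_iff.mp hz'c x).symm
  have hcop : Nat.Coprime p q := (Nat.coprime_primes hp hq).mpr (fun h => hqp h.symm)
  have hord : orderOf (z' * x) = p * q := by
    rw [hcomm.orderOf_mul_eq_mul_orderOf_of_coprime (by rw [hordz', hx]; exact hcop),
      hordz', hx]
  -- the cyclic subgroup generated by `z' * x` decomposes
  set H : Subgroup G := Subgroup.zpowers (z' * x) with hHdef
  have hcardH : Nat.card H = p * q := by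
    rw [Nat.card_zpowers, hord]
  haveI : IsCyclic H := ⟨⟨⟨z' * x, Subgroup.mem_zpowers _⟩, by
    rintro ⟨y, k, rfl⟩
    exact ⟨k, by ext; simp⟩⟩⟩
  have e : Multiplicative (ZMod (Nat.card H)) ≃* H :=
    zmodCyclicMulEquiv inferInstance
  rw [hcardH] at e
  have e2 : (H : Type) ≃* Multiplicative (ZMod p) × Multiplicative (ZMod q) :=
    e.symm.trans <| (AddEquiv.toMultiplicative
      (ZMod.chineseRemainder hcop).toAddEquiv).trans (MulEquiv.prodMultiplicative (ZMod p) (ZMod q))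
  haveI : Fact (1 < p) := ⟨hp.one_lt⟩
  haveI : Fact (1 < q) := ⟨hq.one_lt⟩
  rcases hind H _ _ ⟨e2⟩ with h | h
  · exact (not_subsingleton (Multiplicative (ZMod p))) h
  · exact (not_subsingleton (Multiplicative (ZMod q))) h
end

section
/- Let G be a nontrivial finite p-group all of whose subgroups are indecomposable. Then G has exactly one subgroup of order p. -/
universe u

/-- A nontrivial finite `p`-group all of whose subgroups are indecomposable
has exactly one subgroup of order `p`. -/
theorem stmt_13 (G : Type) [Group G] [Fintype G] [Nontrivial G]
    (p : ℕ) (hp : p.Prime) (hpG : IsPGroup p G)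
    (hind : ∀ H : Subgroup G, Indecomposable H) :
    ∃! H : Subgroup G, Nat.card H = p := by
  classical
  have hfact : Fact p.Prime := ⟨hp⟩
  -- the center is a nontrivial p-group
  have hcenter : Nontrivial (Subgroup.center G) := hpG.center_nontrivial
  have hpZ : IsPGroup p (Subgroup.center G) := hpG.to_subgroup _
  -- get a central element of order p
  have hdvd : p ∣ Nat.card (Subgroup.center G) := by
    obtain ⟨k, hk⟩ := hpZ.exists_card_eq
    rw [hk]
    refine dvd_pow_self p ?_
    rintro rfl
    rw [pow_zero] at hk
    exact (not_subsingleton _) (Nat.card_eq_one_iff_unique.mp hk).1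
  obtain ⟨g, hg⟩ := exists_prime_orderOf_dvd_card p
    (by rwa [Nat.card_eq_fintype_card] at hdvd)
  set z : G := (g : G) with hz
  have hzc : z ∈ Subgroup.center G := g.2
  have hzo : orderOf z = p := by
    rw [hz, Subgroup.orderOf_coe]; exact hg
  set C : Subgroup G := Subgroup.zpowers z with hC
  have hCcard : Nat.card C = p := by rw [hC, Nat.card_zpowers, hzo]
  have hCle : C ≤ Subgroup.center G := by
    rw [hC, Subgroup.zpowers_le]; exact hzc
  refine ⟨C, hCcard, ?_⟩
  intro H hH
  by_contra hne
  -- H and C are disjoint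
  have hdisj : H ⊓ C = ⊥ := by
    have h1 : Nat.card (H ⊓ C : Subgroup G) ∣ p := hH ▸ Subgroup.card_dvd_of_le inf_le_left
    rcases (Nat.Prime.eq_one_or_self_of_dvd hp _ h1) with h | h
    · exact Subgroup.card_eq_one.mp h
    · exfalso
      have hHeq : H ⊓ C = H :=
        Subgroup.eq_of_le_of_card_ge inf_le_left (by rw [h, hH])
      have hCeq : H ⊓ C = C :=
        Subgroup.eq_of_le_of_card_ge inf_le_right (by rw [h, hCcard])
      exact hne (hHeq ▸ hCeq)
  -- C is normal
  have hCnormal : C.Normal := by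
    constructor
    intro n hn gg
    have := hCle hn
    rw [Subgroup.mem_center_iff] at this
    rw [this gg, mul_inv_cancel_right]
    exact hn
  set J : Subgroup G := H ⊔ C with hJ
  have hHJ : H ≤ J := le_sup_left
  have hCJ : C ≤ J := le_sup_right
  -- build the iso J ≃* H × C
  have hcomm : ∀ (m : H) (n : C),
      Commute ((Subgroup.inclusion hHJ) m) ((Subgroup.inclusion hCJ) n) := by
    intro m n
    have hnc : (n : G) ∈ Subgroup.center G := hCle n.2
    rw [Subgroup.mem_center_iff] at hnc
    refine Subtype.ext ?_
    simp only [Subgroup.coe_mul, Subgroup.coe_inclusion]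
    exact hnc (m : G)
  set φ : H × C →* J :=
    MonoidHom.noncommCoprod (Subgroup.inclusion hHJ) (Subgroup.inclusion hCJ) hcomm with hφ
  have hinj : Function.Injective φ := by
    rw [injective_iff_map_eq_one]
    rintro ⟨a, b⟩ hab
    have hab' : (a : G) * (b : G) = 1 := congrArg (Subtype.val) hab
    have haH : (a : G) = (b : G)⁻¹ := by
      rw [eq_inv_iff_mul_eq_one]; exact hab'
    have haC : (a : G) ∈ C := haH ▸ C.inv_mem b.2
    have : (a : G) ∈ H ⊓ C := ⟨a.2, haC⟩
    rw [hdisj, Subgroup.mem_bot] at this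
    have hb : (b : G) = 1 := by
      have := haH ▸ this
      rwa [inv_eq_one] at this
    exact Prod.ext (Subtype.ext this) (Subtype.ext hb)
  have hsurj : Function.Surjective φ := by
    rintro ⟨x, hx⟩
    have hx' : x ∈ (↑(H ⊔ C) : Set G) := hx
    rw [Subgroup.mul_normal H C] at hx'
    obtain ⟨a, ha, b, hb, rfl⟩ := hx'
    exact ⟨(⟨a, ha⟩, ⟨b, hb⟩), rfl⟩
  have hiso : Nonempty ((J : Subgroup G) ≃* (H × C)) :=
    ⟨(MulEquiv.ofBijective φ ⟨hinj, hsurj⟩).symm⟩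
  rcases hind J H C hiso with hs | hs
  · have : Nontrivial H := by
      rw [← Finite.one_lt_card_iff_nontrivial, hH]
      exact hp.one_lt
    exact (not_subsingleton H) hs
  · have : Nontrivial C := by
      rw [← Finite.one_lt_card_iff_nontrivial, hCcard]
      exact hp.one_lt
    exact (not_subsingleton C) hs
end

section
/- Let G be a finite group all of whose subgroups are indecomposable, and suppose G is not a p-group (its order is not a prime power). Then G has no nontrivial normal 2-subgroup: every normal subgroup of G whose order is a power of 2 is trivial. -/
universe u

/-- Key decomposition lemma: if `a`, `b` are nontrivial commuting elements whose
cyclic subgroups intersect trivially, then some subgroup of `G` is decomposable,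
contradicting the indecomposability hypothesis. -/
lemma key_decomp {G : Type} [Group G] (hind : ∀ H : Subgroup G, Indecomposable H)
    (a b : G) (ha : a ≠ 1) (hb : b ≠ 1) (hcomm : Commute a b)
    (hdisj : ∀ g : G, g ∈ Subgroup.zpowers a → g ∈ Subgroup.zpowers b → g = 1) : False := by
  set A := Subgroup.zpowers a with hA
  set B := Subgroup.zpowers b with hB
  have hc : ∀ (s : A) (t : B), Commute (A.subtype s) (B.subtype t) := by
    rintro ⟨s, hs⟩ ⟨t, ht⟩
    obtain ⟨i, rfl⟩ := Subgroup.mem_zpowers_iff.mp hs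
    obtain ⟨j, rfl⟩ := Subgroup.mem_zpowers_iff.mp ht
    exact hcomm.zpow_zpow i j
  set f : A × B →* G := MonoidHom.noncommCoprod A.subtype B.subtype hc with hf
  have hinj : Function.Injective f := by
    rw [← MonoidHom.ker_eq_bot_iff, Subgroup.eq_bot_iff_forall]
    rintro ⟨s, t⟩ hst
    have hst' : (s : G) * (t : G) = 1 := hst
    have hs1 : (s : G) = (t : G)⁻¹ := eq_inv_of_mul_eq_one_left hst'
    have hsB : (s : G) ∈ B := hs1 ▸ B.inv_mem t.2
    have hs0 := hdisj s s.2 hsB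
    have ht0 : (t : G) = 1 := by
      have h' : (t : G)⁻¹ = 1 := by rw [← hs1, hs0]
      simpa using h'
    have : s = 1 := Subtype.ext hs0
    have : t = 1 := Subtype.ext ht0
    simp_all
  have e : (A × B) ≃* f.range := MonoidHom.ofInjective hinj
  rcases hind f.range A B ⟨e.symm⟩ with h | h
  · have : (⟨a, Subgroup.mem_zpowers a⟩ : A) = (1 : A) := h.elim _ _
    exact ha (by simpa using congrArg Subtype.val this)
  · have : (⟨b, Subgroup.mem_zpowers b⟩ : B) = (1 : B) := h.elim _ _
    exact hb (by simpa using congrArg Subtype.val this)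

lemma mem_zpowers_of_orderOf_two {G : Type} [Group G] {a g : G} (ha : orderOf a = 2)
    (hg : g ∈ Subgroup.zpowers a) : g = 1 ∨ g = a := by
  obtain ⟨k, rfl⟩ := Subgroup.mem_zpowers_iff.mp hg
  have h := zpow_mod_orderOf a k
  rw [ha] at h
  simp only [Nat.cast_ofNat] at h
  rcases Int.emod_two_eq k with h2 | h2 <;> rw [← h, h2]
  · left; simp
  · right; simp

/-- If all subgroups of the finite group `G` are indecomposable and `G` is not
a `p`-group, then every normal subgroup of `G` whose order is a power of `2`
is trivial. -/
theorem stmt_14 (G : Type) [Group G] [Fintype G]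
    (hind : ∀ H : Subgroup G, Indecomposable H)
    (hnp : ¬ ∃ p : ℕ, p.Prime ∧ IsPGroup p G)
    (N : Subgroup G) (hN : N.Normal) (h2 : ∃ k : ℕ, Nat.card N = 2 ^ k) :
    N = ⊥ := by
  by_contra hbot
  obtain ⟨k, hk⟩ := h2
  have hp2 : IsPGroup 2 N := IsPGroup.of_card hk
  have hNnt : Nontrivial N := by
    rcases N.bot_or_nontrivial with h | h
    · exact absurd h hbot
    · exact h
  have : Fact (Nat.Prime 2) := ⟨Nat.prime_two⟩
  -- find a central (in N) involution
  have hZnt : Nontrivial (Subgroup.center N) := hp2.center_nontrivial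
  have hZp : IsPGroup 2 (Subgroup.center N) := hp2.to_subgroup _
  obtain ⟨n, hn0, hn⟩ := hZp.nontrivial_iff_card.mp hZnt
  have hdvd : 2 ∣ Nat.card (Subgroup.center N) := hn ▸ dvd_pow_self 2 hn0.ne'
  obtain ⟨z, hz⟩ := exists_prime_orderOf_dvd_card' 2 hdvd
  -- `a` is the image of `z` in `G`
  set zN : N := (z : N) with hzN
  set a : G := (zN : G) with ha
  have hzNord : orderOf zN = 2 := by
    rw [← hz]
    exact orderOf_injective (Subgroup.center N).subtype Subtype.coe_injective z
  have haord : orderOf a = 2 := by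
    rw [← hzNord]
    exact orderOf_injective N.subtype Subtype.coe_injective zN
  have ha1 : a ≠ 1 := by
    intro h; rw [h, orderOf_one] at haord; norm_num at haord
  have haN : a ∈ N := zN.2
  -- uniqueness of the involution in N
  have huniq : ∀ t : N, orderOf t = 2 → (t : G) = a := by
    intro t ht
    by_contra hne
    have htord : orderOf (t : G) = 2 := by
      rw [← ht]
      exact orderOf_injective N.subtype Subtype.coe_injective t
    have ht1 : (t : G) ≠ 1 := by
      intro h; rw [h, orderOf_one] at htord; norm_num at htord
    have hcomm : Commute a (t : G) := by
      have := z.2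
      rw [Subgroup.mem_center_iff] at this
      have h' := this t
      exact congrArg (Subtype.val) h'.symm
    refine key_decomp hind a (t : G) ha1 ht1 hcomm ?_
    intro g hga hgt
    rcases mem_zpowers_of_orderOf_two haord hga with rfl | rfl
    · rfl
    · rcases mem_zpowers_of_orderOf_two htord hgt with h | h
      · exact h
      · exact absurd h.symm hne
  -- a is central in G
  have hacen : ∀ g : G, Commute g a := by
    intro g
    have hmem : g * a * g⁻¹ ∈ N := hN.conj_mem a haN g
    have hcord : orderOf (⟨g * a * g⁻¹, hmem⟩ : N) = 2 := by
      have h1 : orderOf (⟨g * a * g⁻¹, hmem⟩ : N) = orderOf (g * a * g⁻¹) :=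
        Subgroup.orderOf_mk _ _
      have h2 : orderOf (g * a * g⁻¹) = orderOf a := by
        have := orderOf_injective (MulAut.conj g).toMonoidHom (MulAut.conj g).injective a
        simpa [MulAut.conj] using this
      rw [h1, h2, haord]
    have := huniq _ hcord
    simp only [Subgroup.coe_mk] at this
    have h3 : g * a * g⁻¹ = a := this
    show g * a = a * g
    calc g * a = (g * a * g⁻¹) * g := by group
      _ = a * g := by rw [h3]
  -- G is not a 2-group, so there is an odd prime q dividing |G|
  have hcard2 : 2 ∣ Nat.card G := haord ▸ orderOf_dvd_natCard a
  have hcard0 : Nat.card G ≠ 0 := Nat.card_pos.ne'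
  have hq : ∃ q : ℕ, q.Prime ∧ q ∣ Nat.card G ∧ q ≠ 2 := by
    by_contra hq
    push_neg at hq
    apply hnp
    refine ⟨2, Nat.prime_two, IsPGroup.iff_card.mpr ?_⟩
    exact ⟨_, Nat.eq_prime_pow_of_unique_prime_dvd hcard0
      (fun {d} hd hdvd => hq d hd hdvd)⟩
  obtain ⟨q, hqp, hqdvd, hq2⟩ := hq
  have : Fact (Nat.Prime q) := ⟨hqp⟩
  obtain ⟨x, hx⟩ := exists_prime_orderOf_dvd_card' q hqdvd
  have hx1 : x ≠ 1 := by
    intro h; rw [h, orderOf_one] at hx; exact hqp.one_lt.ne' hx.symm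
  refine key_decomp hind a x ha1 hx1 (hacen x).symm ?_
  intro g hga hgx
  have hdg : orderOf g ∣ 2 := by
    have : orderOf (⟨g, hga⟩ : Subgroup.zpowers a) ∣ Nat.card (Subgroup.zpowers a) :=
      orderOf_dvd_natCard _
    rw [Nat.card_zpowers, haord, Subgroup.orderOf_mk g hga] at this
    exact this
  have hdq : orderOf g ∣ q := by
    have : orderOf (⟨g, hgx⟩ : Subgroup.zpowers x) ∣ Nat.card (Subgroup.zpowers x) :=
      orderOf_dvd_natCard _
    rw [Nat.card_zpowers, hx, Subgroup.orderOf_mk g hgx] at this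
    exact this
  have hco : Nat.Coprime 2 q := (Nat.coprime_primes Nat.prime_two hqp).mpr (Ne.symm hq2)
  have h1 : orderOf g ∣ Nat.gcd 2 q := Nat.dvd_gcd hdg hdq
  rw [hco] at h1
  exact orderOf_eq_one_iff.mp (Nat.eq_one_of_dvd_one h1 ▸ rfl)
end

section
/- Let G be a finite solvable group all of whose subgroups are indecomposable, and suppose G is not a p-group (its order is not a prime power). Then the Sylow 2-subgroups of G are cyclic. -/
universe u

/-!
Indecomposability forbids commuting elements `x`, `y` of coprime orders `a`, `b`: the
cyclic group `⟨x * y⟩` of order `a * b` would be `C_a × C_b`. A solvable group has a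
nontrivial abelian normal subgroup `N`; being indecomposable, `N` is cyclic, so for a prime
`q ∣ |N|` the elements `x ∈ N` with `x ^ q = 1` form a normal subgroup `M` of order `q`.
If `q = 2`, then `Aut M` is trivial, so `M` is central, and an element of odd prime order
(there is one, as `G` is not a `2`-group) commutes with `M`: impossible. If `q` is odd, a
Sylow `2`-subgroup `P` meets the centralizer of `M` trivially, so conjugation embeds `P`
into `Aut M ≃ (ZMod q)ˣ`, a cyclic group.
-/

open Subgroup

def MulEquiv.piSplitAt {ι : Type*} [DecidableEq ι] (i : ι) (F : ι → Type*)
    [∀ j, Group (F j)] :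
    ((j : ι) → F j) ≃* F i × ((j : {j // j ≠ i}) → F j) :=
  { Equiv.piSplitAt i F with map_mul' := fun _ _ => rfl }

theorem MulAut.ker_conjNormal {G : Type*} [Group G] (H : Subgroup G) [H.Normal] :
    (MulAut.conjNormal : G →* MulAut H).ker = centralizer H := by
  ext g
  simp only [MonoidHom.mem_ker, MulEquiv.ext_iff, Subtype.ext_iff, MulAut.conjNormal_apply,
    MulAut.one_apply, mul_inv_eq_iff_eq_mul, mem_centralizer_iff, Subtype.forall, SetLike.mem_coe]
  exact forall₂_congr fun _ _ => eq_comm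

theorem subsingleton_mulAut_of_card_eq_two {H : Type*} [Group H] (h : Nat.card H = 2) :
    Subsingleton (MulAut H) := by
  have : Fact (Nat.card H).Prime := ⟨h ▸ Nat.prime_two⟩
  have : IsCyclic H := isCyclic_of_prime_card rfl
  have : Finite H := Nat.finite_of_card_ne_zero (by omega)
  refine (Nat.card_eq_one_iff_unique.mp ?_).1
  rw [IsCyclic.card_mulAut, h, Nat.totient_two]

theorem isCyclic_mulAut_of_prime_card {H : Type*} [Group H] (hp : (Nat.card H).Prime) :
    IsCyclic (MulAut H) := by
  have : Fact (Nat.card H).Prime := ⟨hp⟩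
  have : IsCyclic H := isCyclic_of_prime_card rfl
  exact isCyclic_of_surjective _ (IsCyclic.mulAutMulEquiv H).symm.surjective

theorem exists_ne_one_orderOf_coprime_of_not_isPGroup {G : Type*} [Group G] [Finite G] {p : ℕ}
    (hp : p.Prime) (h : ¬IsPGroup p G) : ∃ x : G, x ≠ 1 ∧ (orderOf x).Coprime p := by
  obtain ⟨r, hr, hrp, hrG⟩ : ∃ r, r.Prime ∧ r ≠ p ∧ r ∣ Nat.card G := by
    by_contra! hcon
    exact h (IsPGroup.of_card (Nat.eq_prime_pow_of_unique_prime_dvd Nat.card_pos.ne'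
      fun hd hdG => not_not.mp fun hne => hcon _ hd hne hdG))
  have : Fact r.Prime := ⟨hr⟩
  obtain ⟨x, hx⟩ := exists_prime_orderOf_dvd_card' r hrG
  refine ⟨x, ?_, hx ▸ (Nat.coprime_primes hr hp).mpr hrp⟩
  rintro rfl
  rw [orderOf_one] at hx
  exact hr.one_lt.ne hx

theorem exists_normal_isMulCommutative_ne_bot (G : Type*) [Group G] [Group.IsSolvable G]
    [Nontrivial G] : ∃ N : Subgroup G, N.Normal ∧ IsMulCommutative N ∧ N ≠ ⊥ := by
  classical
  have hex : ∃ n, derivedSeries G n = ⊥ := Group.IsSolvable.solvable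
  obtain ⟨n, hn⟩ : ∃ n, Nat.find hex = n + 1 := Nat.exists_eq_succ_of_ne_zero fun h0 => by
    have := Nat.find_spec hex
    rw [h0, derivedSeries_zero] at this
    exact top_ne_bot this
  refine ⟨derivedSeries G n, derivedSeries_normal G n, ?_, Nat.find_min hex (by omega)⟩
  rw [← commutator_self_eq_bot_iff, ← derivedSeries_succ, ← hn]
  exact Nat.find_spec hex

namespace Subgroup

variable {G : Type*} [Group G] (N : Subgroup G)

def powEqOne [IsMulCommutative N] (n : ℕ) : Subgroup G where
  carrier := {x | x ∈ N ∧ x ^ n = 1}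
  one_mem' := ⟨N.one_mem, one_pow n⟩
  mul_mem' {x y} hx hy := ⟨N.mul_mem hx.1 hy.1, by
    rw [(show Commute x y from N.le_centralizer hy.1 x hx.1).mul_pow, hx.2, hy.2, one_mul]⟩
  inv_mem' {x} hx := ⟨N.inv_mem hx.1, by rw [inv_pow, hx.2, inv_one]⟩

theorem powEqOne_le [IsMulCommutative N] (n : ℕ) : N.powEqOne n ≤ N := fun _ hx => hx.1

instance [IsMulCommutative N] [N.Normal] (n : ℕ) : (N.powEqOne n).Normal where
  conj_mem x hx g :=
    ⟨‹N.Normal›.conj_mem x hx.1 g, by rw [conj_pow, hx.2, mul_one, mul_inv_cancel]⟩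

theorem card_powEqOne_of_isCyclic [IsCyclic N] [Finite N] {q : ℕ} (hq : q.Prime)
    (hdvd : q ∣ Nat.card N) : Nat.card (N.powEqOne q) = q := by
  have : Fact q.Prime := ⟨hq⟩
  have : IsCyclic (N.powEqOne q) := isCyclic_of_le (N.powEqOne_le q)
  apply Nat.dvd_antisymm
  · rw [← IsCyclic.exponent_eq_card]
    exact Monoid.exponent_dvd_of_forall_pow_eq_one fun x => Subtype.ext x.2.2
  · obtain ⟨y, hy⟩ := exists_prime_orderOf_dvd_card' q hdvd
    have hyq : (y : G) ^ q = 1 := by rw [← hy, ← orderOf_coe]; exact pow_orderOf_eq_one _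
    simpa [← orderOf_coe, hy] using _root_.orderOf_dvd_natCard (⟨y, y.2, hyq⟩ : N.powEqOne q)

theorem exists_normal_prime_card_of_isCyclic [N.Normal] [IsCyclic N] [Finite N] (hN : N ≠ ⊥) :
    ∃ M : Subgroup G, M.Normal ∧ (Nat.card M).Prime := by
  have : Nontrivial N := (nontrivial_iff_ne_bot N).mpr hN
  have hq := Nat.minFac_prime (Finite.one_lt_card (α := N)).ne'
  refine ⟨N.powEqOne (Nat.card N).minFac, inferInstance, ?_⟩
  rwa [N.card_powEqOne_of_isCyclic hq (Nat.minFac_dvd _)]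

end Subgroup

open scoped IsMulCommutative in
theorem Indecomposable.isCyclic {H : Type} [Group H] [IsMulCommutative H] [Finite H]
    (h : Indecomposable H) : IsCyclic H := by
  classical
  obtain ⟨ι, _, n, hn, ⟨e⟩⟩ := CommGroup.equiv_prod_multiplicative_zmod_of_finite H
  cases isEmpty_or_nonempty ι with
  | inl _ =>
    have : Subsingleton H := e.toEquiv.subsingleton
    infer_instance
  | inr hι =>
    obtain ⟨i⟩ := hι
    have : Fact (1 < n i) := ⟨hn i⟩
    let e' := e.trans (MulEquiv.piSplitAt i _)
    rcases h _ _ ⟨e'⟩ with h₁ | _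
    · exact absurd h₁ (not_subsingleton _)
    · have : Unique ((j : {j // j ≠ i}) → Multiplicative (ZMod (n j))) :=
        uniqueOfSubsingleton 1
      exact isCyclic_of_surjective _ (e'.trans MulEquiv.prodUnique).symm.surjective

theorem Indecomposable.eq_one_or_eq_one_of_card_eq_mul {H : Type} [Group H] [IsCyclic H]
    (h : Indecomposable H) {a b : ℕ} (hab : a.Coprime b) (hcard : Nat.card H = a * b) :
    a = 1 ∨ b = 1 := by
  have e : H ≃* Multiplicative (ZMod a) × Multiplicative (ZMod b) :=
    (zmodCyclicMulEquiv ‹_›).symm.trans <|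
      (AddEquiv.toMultiplicative ((ZMod.ringEquivCongr hcard).trans
        (ZMod.chineseRemainder hab)).toAddEquiv).trans (MulEquiv.prodMultiplicative _ _)
  exact (h _ _ ⟨e⟩).imp ZMod.subsingleton_iff.mp ZMod.subsingleton_iff.mp

theorem eq_one_or_eq_one_of_commute_of_coprime {G : Type} [Group G]
    (hind : ∀ H : Subgroup G, Indecomposable H) {x y : G} (hxy : Commute x y)
    (hcop : (orderOf x).Coprime (orderOf y)) : x = 1 ∨ y = 1 := by
  have hcard : Nat.card (zpowers (x * y)) = orderOf x * orderOf y := by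
    rw [Nat.card_zpowers, hxy.orderOf_mul_eq_mul_orderOf_of_coprime hcop]
  simpa only [orderOf_eq_one_iff] using (hind _).eq_one_or_eq_one_of_card_eq_mul hcop hcard

theorem eq_one_of_mem_centralizer_of_coprime {G : Type} [Group G]
    (hind : ∀ H : Subgroup G, Indecomposable H) {M : Subgroup G} (hM : (Nat.card M).Prime)
    {g : G} (hg : g ∈ centralizer M) (hcop : (orderOf g).Coprime (Nat.card M)) : g = 1 := by
  have : Fact (Nat.card M).Prime := ⟨hM⟩
  have : Finite M := Nat.finite_of_card_ne_zero hM.ne_zero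
  obtain ⟨w, hw⟩ := exists_prime_orderOf_dvd_card' (Nat.card M) dvd_rfl
  rw [← hw, ← orderOf_coe] at hcop
  refine (eq_one_or_eq_one_of_commute_of_coprime hind (hg w w.2).symm hcop).resolve_right ?_
  rintro hw1
  rw [← orderOf_coe, hw1, orderOf_one] at hw
  exact hM.one_lt.ne hw

/-- If `G` is a finite solvable group all of whose subgroups are
indecomposable and `G` is not a `p`-group, then the Sylow `2`-subgroups of
`G` are cyclic. -/
theorem stmt_15 (G : Type) [Group G] [Fintype G] [Group.IsSolvable G]
    (hind : ∀ H : Subgroup G, Indecomposable H)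
    (hnp : ¬ ∃ p : ℕ, p.Prime ∧ IsPGroup p G)
    (P : Sylow 2 G) : IsCyclic (P : Subgroup G) := by
  have hn2 : ¬IsPGroup 2 G := fun h => hnp ⟨2, Nat.prime_two, h⟩
  have : Nontrivial G :=
    not_subsingleton_iff_nontrivial.mp fun _ => hn2 (IsPGroup.of_subsingleton _ _)
  obtain ⟨N, _, _, hN⟩ := exists_normal_isMulCommutative_ne_bot G
  have : IsCyclic N := (hind N).isCyclic
  obtain ⟨M, _, hM⟩ := N.exists_normal_prime_card_of_isCyclic hN
  have hker (g : G) (hg : (orderOf g).Coprime (Nat.card M))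
      (h1 : MulAut.conjNormal g = (1 : MulAut M)) : g = 1 :=
    eq_one_of_mem_centralizer_of_coprime hind hM (MulAut.ker_conjNormal M ▸ h1) hg
  by_cases hM2 : Nat.card M = 2
  · have : Subsingleton (MulAut M) := subsingleton_mulAut_of_card_eq_two hM2
    obtain ⟨x, hx1, hx⟩ := exists_ne_one_orderOf_coprime_of_not_isPGroup Nat.prime_two hn2
    exact absurd (hker x (hM2 ▸ hx) (Subsingleton.elim _ _)) hx1
  · have : IsCyclic (MulAut M) := isCyclic_mulAut_of_prime_card hM
    have h2M : (2 : ℕ).Coprime (Nat.card M) :=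
      (Nat.coprime_primes Nat.prime_two hM).mpr (Ne.symm hM2)
    refine isCyclic_of_injective (MulAut.conjNormal.comp (P : Subgroup G).subtype) <|
      (injective_iff_map_eq_one _).mpr fun g hg => Subtype.ext <| hker g ?_ hg
    rw [orderOf_coe]
    exact P.isPGroup'.orderOf_coprime h2M g
end

section
/- Let p and q be distinct primes with p odd, let α, β ≥ 1, and let G = (ℤ/p^αℤ) ⋊_Φ (ℤ/q^βℤ) be a semidirect product determined by a homomorphism Φ : ℤ/q^βℤ → Aut(ℤ/p^αℤ), where a chosen generator of ℤ/q^βℤ acts on a generator a₀ of ℤ/p^αℤ by a₀ ↦ a₀^r. Then every subgroup of G is indecomposable if and only if q^β divides p − 1 and r has order q^β in (ℤ/pℤ)^×. -/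
/-!
The generator of `Q = ℤ/q^β` acts on `N = ℤ/p^α` by multiplication by `r`, so `k` acts by
`r ^ k`. If `r` has order `q^β` mod `p`, each `r ^ k - 1` with `k ≠ 0` is a unit of `ℤ/p^α`,
so no element of order `q` commutes with one of order `p`; since elements of order `p` lie in the
cyclic group `N` and elements of order `q` map into the cyclic group `Q`, two commuting elements
of prime order then generate a cyclic group. In `A × B` with `A`, `B` nontrivial, Cauchy's
theorem gives commuting `(a, 1)`, `(1, b)` of prime order that do not.

Conversely, if `r` has smaller order mod `p`, then `r ^ q^(β-1)` is `≡ 1` mod `p` with `q`-th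
power `1`, hence equals `1`: an element of order `q` of `Q` acts trivially, and together with a
generator of `N` it generates a cyclic subgroup `≅ ℤ/p^α × ℤ/q`.
-/

universe u

open Multiplicative Subgroup

theorem exists_prime_orderOf {A : Type*} [Group A] [Finite A] [Nontrivial A] :
    ∃ a : A, (orderOf a).Prime := by
  have : Fact (Nat.card A).minFac.Prime := ⟨Nat.minFac_prime Finite.one_lt_card.ne'⟩
  obtain ⟨a, ha⟩ := exists_prime_orderOf_dvd_card' _ (Nat.minFac_dvd (Nat.card A))
  exact ⟨a, ha ▸ this.out⟩

theorem indecomposable_of_forall_commute {H : Type u} [Group H] [Finite H]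
    (h : ∀ x y : H, Commute x y → (orderOf x).Prime → (orderOf y).Prime → y ∈ zpowers x) :
    Indecomposable H := by
  intro A B _ _ ⟨e⟩
  by_contra! hAB
  obtain ⟨_, _⟩ := hAB
  have : Finite (A × B) := Finite.of_equiv _ e.toEquiv
  have : Finite A := Finite.prod_left B
  have : Finite B := Finite.prod_right A
  obtain ⟨a, ha⟩ := exists_prime_orderOf (A := A)
  obtain ⟨b, hb⟩ := exists_prime_orderOf (A := B)
  have hcomm : Commute (e.symm (a, 1)) (e.symm (1, b)) :=
    (Commute.prod (Commute.one_right a) (Commute.one_left b)).map e.symm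
  obtain ⟨k, hk⟩ := mem_zpowers_iff.mp
    (h _ _ hcomm (by simpa [Prod.orderOf_mk]) (by simpa [Prod.orderOf_mk]))
  have hb1 : b = 1 := by
    simpa using (congrArg Prod.snd (congrArg e hk)).symm
  rw [hb1, orderOf_one] at hb
  exact Nat.not_prime_one hb

theorem Subgroup.indecomposable_of_forall_commute {G : Type u} [Group G] [Finite G]
    (h : ∀ x y : G, Commute x y → (orderOf x).Prime → (orderOf y).Prime → y ∈ zpowers x)
    (K : Subgroup G) : Indecomposable K := by
  refine _root_.indecomposable_of_forall_commute fun x y hxy hx hy => ?_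
  obtain ⟨k, hk⟩ := mem_zpowers_iff.mp <| h x y
    (by simpa [Commute, SemiconjBy] using congrArg Subtype.val hxy)
    (by rwa [orderOf_coe]) (by rwa [orderOf_coe])
  exact mem_zpowers_iff.mpr ⟨k, Subtype.ext (by simpa using hk)⟩

theorem not_indecomposable_of_isCyclic {H : Type} [Group H] [IsCyclic H] {m n : ℕ}
    (hmn : m.Coprime n) (hm : 1 < m) (hn : 1 < n) (hH : Nat.card H = m * n) :
    ¬ Indecomposable H := by
  have : NeZero m := ⟨by omega⟩
  have : NeZero n := ⟨by omega⟩
  have hcyc : IsCyclic (Multiplicative (ZMod m) × Multiplicative (ZMod n)) :=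
    Group.isCyclic_prod_iff.mpr ⟨inferInstance, inferInstance, by simpa using hmn⟩
  have e : H ≃* Multiplicative (ZMod m) × Multiplicative (ZMod n) :=
    mulEquivOfCyclicCardEq (by simp [hH])
  intro h
  have : Nontrivial (ZMod m) := ZMod.nontrivial_iff.mpr hm.ne'
  have : Nontrivial (ZMod n) := ZMod.nontrivial_iff.mpr hn.ne'
  rcases h _ _ ⟨e⟩ with h | h <;> exact not_subsingleton _ h

theorem IsCyclic.mem_zpowers_of_orderOf_dvd {C : Type*} [CommGroup C] [IsCyclic C] [Finite C]
    {a b : C} (h : orderOf b ∣ orderOf a) : b ∈ zpowers a := by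
  have hker : zpowers a = (powMonoidHom (orderOf a) : C →* C).ker := by
    refine eq_of_le_of_card_ge ?_ ?_
    · rw [zpowers_le]; simp [pow_orderOf_eq_one]
    · rw [IsCyclic.card_powMonoidHom_ker, Nat.card_zpowers,
        Nat.gcd_eq_right (_root_.orderOf_dvd_natCard a)]
  rw [hker]
  simpa using orderOf_dvd_iff_pow_eq_one.mp h

namespace SemidirectProduct

variable {N G : Type*} [Group N] [Group G] {φ : G →* MulAut N}

instance [Finite N] [Finite G] : Finite (N ⋊[φ] G) := Finite.of_equiv _ equivProd.symm

theorem right_eq_one_of_coprime [Finite G] {x : N ⋊[φ] G}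
    (h : (orderOf x).Coprime (Nat.card G)) : x.right = 1 :=
  orderOf_eq_one_iff.mp <| Nat.eq_one_of_dvd_coprimes h
    (orderOf_map_dvd rightHom x) (orderOf_dvd_natCard (rightHom x))

theorem eq_inl_of_right_eq_one {x : N ⋊[φ] G} (hx : x.right = 1) : x = inl x.left := by
  rw [← inl_left_mul_inr_right x, hx, map_one, mul_one, left_inl]

theorem orderOf_left_of_right_eq_one {x : N ⋊[φ] G} (hx : x.right = 1) :
    orderOf x.left = orderOf x := by
  conv_rhs => rw [eq_inl_of_right_eq_one hx, orderOf_injective inl inl_injective]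

theorem eq_one_of_right_eq_one [Finite N] {x : N ⋊[φ] G} (hx : x.right = 1)
    (h : (orderOf x).Coprime (Nat.card N)) : x = 1 :=
  orderOf_eq_one_iff.mp <| Nat.eq_one_of_dvd_coprimes h dvd_rfl
    (orderOf_left_of_right_eq_one hx ▸ orderOf_dvd_natCard x.left)

theorem apply_left_eq_of_commute {N : Type*} [CommGroup N] {φ : G →* MulAut N}
    {x y : N ⋊[φ] G} (hx : x.right = 1) (h : Commute x y) : φ y.right x.left = x.left := by
  have h := congrArg left h.eq
  rw [mul_left, mul_left, hx, map_one, MulAut.one_apply, mul_comm] at h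
  exact (mul_left_cancel h).symm

end SemidirectProduct

theorem ZMod.isUnit_of_castHom_ne_zero {p α : ℕ} (hp : p.Prime) (hα : α ≠ 0)
    {x : ZMod (p ^ α)} (hx : ZMod.castHom (dvd_pow_self p hα) (ZMod p) x ≠ 0) : IsUnit x := by
  have : NeZero (p ^ α) := ⟨pow_ne_zero _ hp.ne_zero⟩
  rw [← ZMod.natCast_zmod_val x,
    ZMod.isUnit_natCast_iff_not_dvd_pow hp (Nat.pos_of_ne_zero hα)]
  rwa [← ZMod.natCast_zmod_val x, map_natCast, Ne, ZMod.natCast_eq_zero_iff] at hx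

-- The geometric sum `∑ i < n, x ^ i` is `≡ n` mod `p`, hence a unit, and it kills `x - 1`.
theorem ZMod.eq_one_of_pow_eq_one {p α n : ℕ} (hp : p.Prime) (hα : α ≠ 0)
    {x : ZMod (p ^ α)} (hx : ZMod.castHom (dvd_pow_self p hα) (ZMod p) x = 1) (hn : ¬ p ∣ n)
    (hxn : x ^ n = 1) : x = 1 := by
  have hunit : IsUnit (∑ i ∈ Finset.range n, x ^ i) := by
    refine ZMod.isUnit_of_castHom_ne_zero hp hα ?_
    rwa [map_sum, Finset.sum_congr rfl fun i _ => by rw [map_pow, hx, one_pow],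
      Finset.sum_const, Finset.card_range, nsmul_one, Ne, ZMod.natCast_eq_zero_iff]
  refine sub_eq_zero.mp (hunit.mul_right_eq_zero.mp ?_)
  rw [geom_sum_mul, hxn, sub_self]

namespace CyclicSemidirect

variable {p q α β r : ℕ}
  {Φ : Multiplicative (ZMod (q ^ β)) →* MulAut (Multiplicative (ZMod (p ^ α)))}

local notation "G" =>
  SemidirectProduct (Multiplicative (ZMod (p ^ α))) (Multiplicative (ZMod (q ^ β))) Φ

theorem pow_apply_ofAdd [NeZero (p ^ α)]
    (hr : Φ (ofAdd 1) (ofAdd 1) = ofAdd (r : ZMod (p ^ α))) (n : ℕ) (x : ZMod (p ^ α)) :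
    (Φ (ofAdd 1) ^ n) (ofAdd x) = ofAdd ((r : ZMod (p ^ α)) ^ n * x) := by
  induction n with
  | zero => simp
  | succ n ih =>
    have hx : ofAdd ((r : ZMod (p ^ α)) ^ n * x) =
        ofAdd 1 ^ ((r : ZMod (p ^ α)) ^ n * x).val := by
      rw [← ofAdd_nsmul, nsmul_one, ZMod.natCast_zmod_val]
    rw [pow_succ', MulAut.mul_apply, ih, hx, map_pow, hr, ← ofAdd_nsmul, nsmul_eq_mul,
      ZMod.natCast_zmod_val, pow_succ]
    ring_nf

theorem apply_ofAdd [NeZero (p ^ α)] [NeZero (q ^ β)]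
    (hr : Φ (ofAdd 1) (ofAdd 1) = ofAdd (r : ZMod (p ^ α)))
    (k : ZMod (q ^ β)) (x : ZMod (p ^ α)) :
    Φ (ofAdd k) (ofAdd x) = ofAdd ((r : ZMod (p ^ α)) ^ k.val * x) := by
  rw [← pow_apply_ofAdd hr, ← map_pow, ← ofAdd_nsmul, nsmul_one, ZMod.natCast_zmod_val]

theorem natCast_pow_eq_one [NeZero (p ^ α)]
    (hr : Φ (ofAdd 1) (ofAdd 1) = ofAdd (r : ZMod (p ^ α))) :
    (r : ZMod (p ^ α)) ^ q ^ β = 1 := by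
  have h := pow_apply_ofAdd hr (q ^ β) 1
  rwa [← map_pow, ← ofAdd_nsmul, nsmul_one, ZMod.natCast_self, ofAdd_zero, map_one,
    MulAut.one_apply, mul_one, ofAdd.injective.eq_iff, eq_comm] at h

theorem orderOf_natCast_dvd [NeZero (p ^ α)] (hα : α ≠ 0)
    (hr : Φ (ofAdd 1) (ofAdd 1) = ofAdd (r : ZMod (p ^ α))) :
    orderOf (r : ZMod p) ∣ q ^ β := by
  refine orderOf_dvd_of_pow_eq_one ?_
  simpa only [map_pow, map_natCast, map_one] using
    congrArg (ZMod.castHom (dvd_pow_self p hα) (ZMod p)) (natCast_pow_eq_one hr)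

-- `Φ k` multiplies by `r ^ k.val`, and `r ^ k.val - 1` is a unit as `r` has order `q^β` mod `p`.
theorem eq_one_of_apply_eq_self [NeZero (p ^ α)] [NeZero (q ^ β)] (hp : p.Prime) (hα : α ≠ 0)
    (hr : Φ (ofAdd 1) (ofAdd 1) = ofAdd (r : ZMod (p ^ α)))
    (hord : orderOf (r : ZMod p) = q ^ β) {k : Multiplicative (ZMod (q ^ β))} (hk : k ≠ 1)
    {x : Multiplicative (ZMod (p ^ α))} (hx : Φ k x = x) : x = 1 := by
  rw [← ofAdd_toAdd k, ← ofAdd_toAdd x, apply_ofAdd hr, ofAdd.injective.eq_iff] at hx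
  have hval : (toAdd k).val ≠ 0 := by
    rwa [Ne, ZMod.val_eq_zero, ← ofAdd_eq_one, ofAdd_toAdd]
  have hunit : IsUnit ((r : ZMod (p ^ α)) ^ (toAdd k).val - 1) := by
    refine ZMod.isUnit_of_castHom_ne_zero hp hα ?_
    rw [map_sub, map_pow, map_natCast, map_one, sub_ne_zero]
    refine fun h => hval (Nat.eq_zero_of_dvd_of_lt (hord ▸ orderOf_dvd_of_pow_eq_one h) ?_)
    exact ZMod.val_lt _
  have hzero : ((r : ZMod (p ^ α)) ^ (toAdd k).val - 1) * toAdd x = 0 := by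
    rw [sub_mul, hx, one_mul, sub_self]
  rw [← ofAdd_toAdd x, hunit.mul_right_eq_zero.mp hzero, ofAdd_zero]

open SemidirectProduct

theorem orderOf_eq_or_eq_of_prime [NeZero (p ^ α)] [NeZero (q ^ β)] (hp : p.Prime)
    (hq : q.Prime) {x : G} (hx : (orderOf x).Prime) : orderOf x = p ∨ orderOf x = q := by
  have hdvd : orderOf x ∣ p ^ α * q ^ β := by
    simpa [SemidirectProduct.card] using orderOf_dvd_natCard x
  rcases (Nat.Prime.dvd_mul hx).mp hdvd with h | h
  · exact .inl ((Nat.prime_dvd_prime_iff_eq hx hp).mp (hx.dvd_of_dvd_pow h))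
  · exact .inr ((Nat.prime_dvd_prime_iff_eq hx hq).mp (hx.dvd_of_dvd_pow h))

theorem right_eq_one_of_orderOf_eq [NeZero (q ^ β)] (hp : p.Prime) (hq : q.Prime) (hpq : p ≠ q)
    {x : G} (hx : orderOf x = p) : x.right = 1 :=
  right_eq_one_of_coprime <| by
    simpa [hx] using ((Nat.coprime_primes hp hq).mpr hpq).pow_right β

theorem right_ne_one_of_orderOf_eq [NeZero (p ^ α)] (hp : p.Prime) (hq : q.Prime) (hpq : p ≠ q)
    {x : G} (hx : orderOf x = q) : x.right ≠ 1 := by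
  intro h
  have h1 : x = 1 := eq_one_of_right_eq_one h <| by
    simpa [hx] using ((Nat.coprime_primes hq hp).mpr hpq.symm).pow_right α
  rw [h1, orderOf_one] at hx
  exact hq.one_lt.ne hx

theorem mem_zpowers_of_orderOf_eq_left [NeZero (p ^ α)] [NeZero (q ^ β)] (hp : p.Prime)
    (hq : q.Prime) (hpq : p ≠ q) {x y : G} (hx : orderOf x = p) (hy : orderOf y = p) :
    y ∈ zpowers x := by
  have hxr := right_eq_one_of_orderOf_eq hp hq hpq hx
  have hyr := right_eq_one_of_orderOf_eq hp hq hpq hy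
  obtain ⟨k, hk⟩ := mem_zpowers_iff.mp <| IsCyclic.mem_zpowers_of_orderOf_dvd (a := x.left)
    (b := y.left) <| by
      rw [orderOf_left_of_right_eq_one hxr, orderOf_left_of_right_eq_one hyr, hx, hy]
  refine mem_zpowers_iff.mpr ⟨k, ?_⟩
  rw [eq_inl_of_right_eq_one hxr, eq_inl_of_right_eq_one hyr, ← map_zpow, hk]

theorem mem_zpowers_of_orderOf_eq_right [NeZero (p ^ α)] [NeZero (q ^ β)] (hp : p.Prime)
    (hq : q.Prime) (hpq : p ≠ q) {x y : G} (hxy : Commute x y) (hx : orderOf x = q)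
    (hy : orderOf y = q) : y ∈ zpowers x := by
  have : Fact q.Prime := ⟨hq⟩
  have hxr : orderOf x.right = q := by
    refine orderOf_eq_prime ?_ (right_ne_one_of_orderOf_eq hp hq hpq hx)
    simpa [hx] using orderOf_dvd_iff_pow_eq_one.mp (orderOf_map_dvd rightHom x)
  obtain ⟨k, hk⟩ := mem_zpowers_iff.mp <| IsCyclic.mem_zpowers_of_orderOf_dvd (a := x.right)
    (b := y.right) <| (orderOf_map_dvd rightHom y).trans (hy.trans hxr.symm).dvd
  have hw : (y * (x ^ k)⁻¹) ^ q = 1 := by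
    have hxk : (x ^ k) ^ q = (x ^ q) ^ k := by
      rw [← zpow_natCast, ← zpow_natCast x q, ← zpow_mul, ← zpow_mul, mul_comm]
    rw [(hxy.symm.zpow_right k).inv_right.mul_pow, inv_pow, hxk,
      orderOf_dvd_iff_pow_eq_one.mp hx.dvd, orderOf_dvd_iff_pow_eq_one.mp hy.dvd, one_zpow,
      inv_one, one_mul]
  refine mem_zpowers_iff.mpr ⟨k, (mul_inv_eq_one.mp (eq_one_of_right_eq_one ?_ ?_)).symm⟩
  · change rightHom (y * (x ^ k)⁻¹) = 1
    rw [map_mul, map_inv, map_zpow, rightHom_eq_right, hk, mul_inv_cancel]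
  · refine Nat.Coprime.coprime_dvd_left (orderOf_dvd_of_pow_eq_one hw) ?_
    simpa using ((Nat.coprime_primes hq hp).mpr hpq.symm).pow_right α

theorem not_commute_of_orderOf_eq [NeZero (p ^ α)] [NeZero (q ^ β)] (hp : p.Prime)
    (hq : q.Prime) (hpq : p ≠ q) (hα : α ≠ 0)
    (hr : Φ (ofAdd 1) (ofAdd 1) = ofAdd (r : ZMod (p ^ α)))
    (hord : orderOf (r : ZMod p) = q ^ β) {x y : G} (hx : orderOf x = p) (hy : orderOf y = q) :
    ¬ Commute x y := by
  intro hxy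
  have hxr := right_eq_one_of_orderOf_eq hp hq hpq hx
  have hxl : x.left = 1 := eq_one_of_apply_eq_self hp hα hr hord
    (right_ne_one_of_orderOf_eq hp hq hpq hy) (apply_left_eq_of_commute hxr hxy)
  rw [eq_inl_of_right_eq_one hxr, hxl, map_one, orderOf_one] at hx
  exact hp.one_lt.ne hx

theorem mem_zpowers_of_commute [NeZero (p ^ α)] [NeZero (q ^ β)] (hp : p.Prime)
    (hq : q.Prime) (hpq : p ≠ q) (hα : α ≠ 0)
    (hr : Φ (ofAdd 1) (ofAdd 1) = ofAdd (r : ZMod (p ^ α)))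
    (hord : orderOf (r : ZMod p) = q ^ β) {x y : G} (hxy : Commute x y)
    (hx : (orderOf x).Prime) (hy : (orderOf y).Prime) : y ∈ zpowers x := by
  rcases orderOf_eq_or_eq_of_prime hp hq hx with hx | hx <;>
    rcases orderOf_eq_or_eq_of_prime hp hq hy with hy | hy
  · exact mem_zpowers_of_orderOf_eq_left hp hq hpq hx hy
  · exact absurd hxy (not_commute_of_orderOf_eq hp hq hpq hα hr hord hx hy)
  · exact absurd hxy.symm (not_commute_of_orderOf_eq hp hq hpq hα hr hord hy hx)
  · exact mem_zpowers_of_orderOf_eq_right hp hq hpq hxy hx hy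

theorem exists_orderOf_eq_and_eq_one [NeZero (p ^ α)] [NeZero (q ^ β)] (hp : p.Prime)
    (hq : q.Prime) (hpq : p ≠ q) (hα : α ≠ 0)
    (hr : Φ (ofAdd 1) (ofAdd 1) = ofAdd (r : ZMod (p ^ α)))
    (hne : orderOf (r : ZMod p) ≠ q ^ β) :
    ∃ k : Multiplicative (ZMod (q ^ β)), orderOf k = q ∧ Φ k = 1 := by
  obtain ⟨i, hiβ, hi⟩ := (Nat.dvd_prime_pow hq).mp (orderOf_natCast_dvd hα hr)
  have hiβ' : i + 1 ≤ β := by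
    rcases hiβ.lt_or_eq with h | rfl
    · exact h
    · exact absurd hi hne
  have hlt : q ^ (β - 1) < q ^ β := Nat.pow_lt_pow_right hq.one_lt (by omega)
  have hr1 : (r : ZMod (p ^ α)) ^ q ^ (β - 1) = 1 := by
    refine ZMod.eq_one_of_pow_eq_one (n := q) hp hα ?_
      (fun h => hpq ((Nat.prime_dvd_prime_iff_eq hp hq).mp h)) ?_
    · rw [map_pow, map_natCast, ← orderOf_dvd_iff_pow_eq_one, hi]
      exact Nat.pow_dvd_pow q (by omega)
    · rw [← pow_mul, ← pow_succ, Nat.sub_add_cancel (by omega), natCast_pow_eq_one hr]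
  refine ⟨ofAdd ((q ^ (β - 1) : ℕ) : ZMod (q ^ β)), ?_, ?_⟩
  · rw [orderOf_ofAdd_eq_addOrderOf, ZMod.addOrderOf_coe _ (pow_ne_zero _ hq.ne_zero),
      Nat.gcd_eq_right (Nat.pow_dvd_pow q (Nat.sub_le β 1)), Nat.pow_div (Nat.sub_le β 1) hq.pos,
      Nat.sub_sub_self (by omega), pow_one]
  · ext x
    rw [MulAut.one_apply, ← ofAdd_toAdd x, apply_ofAdd hr, ZMod.val_cast_of_lt hlt, hr1, one_mul]

theorem not_forall_indecomposable [NeZero (p ^ α)] [NeZero (q ^ β)] (hp : p.Prime)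
    (hq : q.Prime) (hpq : p ≠ q) (hα : α ≠ 0)
    (hr : Φ (ofAdd 1) (ofAdd 1) = ofAdd (r : ZMod (p ^ α)))
    (hne : orderOf (r : ZMod p) ≠ q ^ β) : ¬ ∀ H : Subgroup G, Indecomposable H := by
  obtain ⟨k, hk, hΦk⟩ := exists_orderOf_eq_and_eq_one hp hq hpq hα hr hne
  have hcomm : Commute (inl (ofAdd (1 : ZMod (p ^ α)))) (inr (φ := Φ) k) := by
    ext <;> simp [hΦk]
  have hcop : (p ^ α).Coprime q := ((Nat.coprime_primes hp hq).mpr hpq).pow_left α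
  have hinl : orderOf (inl (φ := Φ) (ofAdd (1 : ZMod (p ^ α)))) = p ^ α := by
    rw [orderOf_injective inl inl_injective, orderOf_ofAdd_eq_addOrderOf, ZMod.addOrderOf_one]
  have hinr : orderOf (inr (φ := Φ) k) = q := by rw [orderOf_injective inr inr_injective, hk]
  have hg : orderOf (inl (ofAdd (1 : ZMod (p ^ α))) * inr (φ := Φ) k) = p ^ α * q := by
    rw [hcomm.orderOf_mul_eq_mul_orderOf_of_coprime (by rwa [hinl, hinr]), hinl, hinr]
  exact fun h => not_indecomposable_of_isCyclic hcop (Nat.one_lt_pow hα hp.one_lt) hq.one_lt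
    (by rw [Nat.card_zpowers, hg]) (h _)

end CyclicSemidirect

open CyclicSemidirect

theorem stmt_18_general (p q α β : ℕ) (hp : p.Prime) (hq : q.Prime)
    (hpq : p ≠ q) (hα : 1 ≤ α) (r : ℕ)
    (Φ : Multiplicative (ZMod (q ^ β)) →* MulAut (Multiplicative (ZMod (p ^ α))))
    (hr : Φ (Multiplicative.ofAdd (1 : ZMod (q ^ β)))
        (Multiplicative.ofAdd (1 : ZMod (p ^ α))) =
        Multiplicative.ofAdd ((r : ZMod (p ^ α)))) :
    (∀ H : Subgroup (SemidirectProduct (Multiplicative (ZMod (p ^ α)))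
        (Multiplicative (ZMod (q ^ β))) Φ), Indecomposable H) ↔
      (q ^ β ∣ p - 1 ∧ orderOf ((r : ZMod p)) = q ^ β) := by
  have : NeZero (p ^ α) := ⟨pow_ne_zero _ hp.ne_zero⟩
  have : NeZero (q ^ β) := ⟨pow_ne_zero _ hq.ne_zero⟩
  have : Fact p.Prime := ⟨hp⟩
  have hα₀ : α ≠ 0 := by omega
  constructor
  · intro h
    have hord : orderOf (r : ZMod p) = q ^ β := by
      by_contra hne
      exact not_forall_indecomposable hp hq hpq hα₀ hr hne h
    refine ⟨hord ▸ ZMod.orderOf_dvd_card_sub_one fun h0 => ?_, hord⟩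
    rw [h0, orderOf_zero] at hord
    exact pow_ne_zero β hq.ne_zero hord.symm
  · rintro ⟨-, hord⟩
    exact Subgroup.indecomposable_of_forall_commute fun x y =>
      mem_zpowers_of_commute hp hq hpq hα₀ hr hord

/-- For distinct primes `p, q` with `p` odd and `α, β ≥ 1`, consider the
semidirect product `G = (ℤ/p^αℤ) ⋊[Φ] (ℤ/q^βℤ)` whose chosen generator acts
on the generator of `ℤ/p^αℤ` by raising to the `r`-th power.  All subgroups
of `G` are indecomposable iff `q^β ∣ p - 1` and `r` has order `q^β` in
`(ℤ/pℤ)ˣ`. -/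
theorem stmt_18 (p q α β : ℕ) (hp : p.Prime) (hq : q.Prime)
    (hpodd : Odd p) (hpq : p ≠ q) (hα : 1 ≤ α) (hβ : 1 ≤ β) (r : ℕ)
    (Φ : Multiplicative (ZMod (q ^ β)) →* MulAut (Multiplicative (ZMod (p ^ α))))
    (hr : Φ (Multiplicative.ofAdd (1 : ZMod (q ^ β)))
        (Multiplicative.ofAdd (1 : ZMod (p ^ α))) =
        Multiplicative.ofAdd ((r : ZMod (p ^ α)))) :
    (∀ H : Subgroup (SemidirectProduct (Multiplicative (ZMod (p ^ α)))
        (Multiplicative (ZMod (q ^ β))) Φ), Indecomposable H) ↔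
      (q ^ β ∣ p - 1 ∧ orderOf ((r : ZMod p)) = q ^ β) :=
  stmt_18_general p q α β hp hq hpq hα r Φ hr
end
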